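/- arXiv:1802.06976 — 2 statements merged into one kernel-verified Lean document; each statement's English description precedes it below -/
import Mathlib

section
/- Let G = (V,E) be a finite simple graph on V = {1,…,n} and let B₁,…,B_k ⊆ V with B₁ ∪ … ∪ B_k = V. Define H_j := B₁ ∪ … ∪ B_j, R_j := B_j \ H_{j−1}, S_j := H_{j−1} ∩ B_j (with H₀ := ∅). Assume: (a) for each 1 < i ≤ k there exists j < i with S_i ⊆ B_j; (b) each S_i induces a complete subgraph of G; and (c) for each 1 < j ≤ k, every path in the induced subgraph G_{H_j} from a vertex of H_{j−1} \ S_j to a vertex of R_j passes through a vertex of S_j. Let s := max_{1 ≤ i ≤ k} |S_i| and let f : ℝ → ℝ with f(0) = 0. If f[M] ∈ P_{G_{B_i}}(ℝ) for every M ∈ P_{G_{B_i}}(ℝ) and every 1 ≤ i ≤ k, and f[X+Y] − f[X] − f[Y] is positive semidefinite for all s×s real symmetric positive semidefinite matrices X, Y, then f[M] ∈ P_G(ℝ) for every M ∈ P_G(ℝ). -/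
open Matrix

/-- Entrywise power with the convention `0 ^ α := 0` for all `α`. -/
noncomputable def powF (α x : ℝ) : ℝ := if x = 0 then 0 else x ^ α

/-- `ψ_α(x) := sgn(x) * |x| ^ α`, with `ψ_α(0) := 0`. -/
noncomputable def psiF (α x : ℝ) : ℝ := if x = 0 then 0 else Real.sign x * |x| ^ α

/-- `φ_α(x) := |x| ^ α`, with `φ_α(0) := 0`. -/
noncomputable def phiF (α x : ℝ) : ℝ := if x = 0 then 0 else |x| ^ α
/-- `P_G(I)`: symmetric positive semidefinite matrices with entries in `I`, vanishing at
off-diagonal positions corresponding to non-edges of `G`. -/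
def PG {V : Type*} [Fintype V] (G : SimpleGraph V) (I : Set ℝ) : Set (Matrix V V ℝ) :=
  {M | M.PosSemidef ∧ (∀ i j, M i j ∈ I) ∧ ∀ i j, i ≠ j → ¬ G.Adj i j → M i j = 0}

/-- `H_G`: powers `α` such that `A ↦ A^{∘α}` maps `P_G([0,∞))` into `P_G(ℝ)`. -/
noncomputable def HSet {V : Type*} [Fintype V] (G : SimpleGraph V) : Set ℝ :=
  {α | ∀ A ∈ PG G (Set.Ici 0), A.map (powF α) ∈ PG G Set.univ}

/-- `H_G^ψ`: powers `α` such that `ψ_α[-]` maps `P_G(ℝ)` into `P_G(ℝ)`. -/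
noncomputable def HSetPsi {V : Type*} [Fintype V] (G : SimpleGraph V) : Set ℝ :=
  {α | ∀ A ∈ PG G Set.univ, A.map (psiF α) ∈ PG G Set.univ}

/-- `H_G^φ`: powers `α` such that `φ_α[-]` maps `P_G(ℝ)` into `P_G(ℝ)`. -/
noncomputable def HSetPhi {V : Type*} [Fintype V] (G : SimpleGraph V) : Set ℝ :=
  {α | ∀ A ∈ PG G Set.univ, A.map (phiF α) ∈ PG G Set.univ}

/-- A graph is chordal if every cycle of length at least 4 has a chord, i.e. an edge of `G`
joining two vertices of the cycle that is not an edge of the cycle. -/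
def IsChordalG {V : Type*} (G : SimpleGraph V) : Prop :=
  ∀ ⦃v : V⦄ (w : G.Walk v v), w.IsCycle → 4 ≤ w.length →
    ∃ i j : V, i ∈ w.support ∧ j ∈ w.support ∧ G.Adj i j ∧ ¬ w.toSubgraph.Adj i j

/-- The history `H_{j-1} = B_0 ∪ ⋯ ∪ B_{j-1}` (0-indexed: `histFun B j = ⋃_{i < j} B i`). -/
def histFun {n k : ℕ} (B : Fin k → Finset (Fin n)) (j : ℕ) : Finset (Fin n) :=
  (Finset.univ.filter fun i : Fin k => (i : ℕ) < j).biUnion B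

/-- The separator `S_j = (B_0 ∪ ⋯ ∪ B_{j-1}) ∩ B_j`. -/
def sepFun {n k : ℕ} (B : Fin k → Finset (Fin n)) (j : Fin k) : Finset (Fin n) :=
  histFun B j ∩ B j

/-- The residual `R_j = B_j \ (B_0 ∪ ⋯ ∪ B_{j-1})`. -/
def resFun {n k : ℕ} (B : Fin k → Finset (Fin n)) (j : Fin k) : Finset (Fin n) :=
  B j \ histFun B j

/-!
Induction along the ordering. At step `j`, write a matrix `M` supported on `H_j = H_{j-1} ∪ B_j`
as the Gram matrix of vectors `c_i`, and let `K` be the span of the residual vectors `c_r`,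
`r ∈ R_j`. Condition (c) forbids edges between `H_{j-1} \ S_j` and `R_j`, so the vectors indexed
there are orthogonal to `K`; splitting every `c_i` into its components in `Kᗮ` and `K` gives
`M = N₁ + N₂` with `N₁, N₂` positive semidefinite and supported on `H_{j-1}` and `B_j`, and both
inherit the zero pattern of `G` because `S_j` is a clique. Then
`f[M] = f[N₁] + f[N₂] + (f[N₁ + N₂] - f[N₁] - f[N₂])`: the first two terms are positive
semidefinite by induction and by the hypothesis on `B_j`, and the correction term vanishes
outside `S_j × S_j` (as `f 0 = 0`), where it is positive semidefinite by super-additivity.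
-/

open scoped InnerProductSpace

lemma exists_orthogonal_split {ι E : Type*} [NormedAddCommGroup E] [InnerProductSpace ℝ E]
    [FiniteDimensional ℝ E] (c : ι → E) {H B : Set ι} (hc : ∀ i, i ∉ H → i ∉ B → c i = 0)
    (horth : ∀ i ∈ H \ B, ∀ j ∈ B \ H, ⟪c i, c j⟫_ℝ = 0) :
    ∃ e d : ι → E, c = e + d ∧ (∀ i j, ⟪e i, d j⟫_ℝ = 0) ∧ (∀ i ∉ H, e i = 0) ∧
      ∀ i ∉ B, d i = 0 := by
  set K := Submodule.span ℝ (c '' (B \ H))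
  have hK : ∀ i ∈ B \ H, c i ∈ K := fun i hi => Submodule.subset_span ⟨i, hi, rfl⟩
  have hKperp : ∀ i ∈ H \ B, c i ∈ Kᗮ := by
    have : Submodule.span ℝ (c '' (H \ B)) ⟂ K := by
      rw [Submodule.isOrtho_span]
      rintro _ ⟨i, hi, rfl⟩ _ ⟨j, hj, rfl⟩
      exact horth i hi j hj
    exact fun i hi => this (Submodule.subset_span ⟨i, hi, rfl⟩)
  refine ⟨fun i => c i - K.starProjection (c i), fun i => K.starProjection (c i),
    by ext1 i; simp, fun i j => ?_, fun i hi => ?_, fun i hi => ?_⟩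
  · exact Submodule.inner_left_of_mem_orthogonal (K.starProjection_apply_mem _)
      (K.sub_starProjection_mem_orthogonal _)
  · by_cases hiB : i ∈ B
    · simp [Submodule.starProjection_eq_self_iff.mpr (hK i ⟨hiB, hi⟩)]
    · simp [hc i hi hiB]
  · by_cases hiH : i ∈ H
    · exact K.starProjection_apply_eq_zero_iff.mpr (hKperp i ⟨hiH, hi⟩)
    · simp [hc i hiH hi]

namespace Matrix

lemma PosSemidef.exists_eq_gram {n : Type*} [Finite n] {M : Matrix n n ℝ}
    (hM : M.PosSemidef) : ∃ (m : ℕ) (v : n → EuclideanSpace ℝ (Fin m)), M = gram ℝ v := by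
  obtain ⟨m, w, rfl⟩ := posSemidef_iff_eq_sum_vecMulVec.mp hM
  refine ⟨m, fun i => WithLp.toLp 2 fun r => w r i, ?_⟩
  ext i j
  simp [Matrix.sum_apply, vecMulVec_apply, PiLp.inner_apply, mul_comm]

lemma gram_add_of_forall_inner_eq_zero {ι E : Type*} [NormedAddCommGroup E]
    [InnerProductSpace ℝ E] {e d : ι → E} (h : ∀ i j, ⟪e i, d j⟫_ℝ = 0) :
    gram ℝ (e + d) = gram ℝ e + gram ℝ d := by
  ext i j
  simp [inner_add_left, inner_add_right, h, real_inner_comm (e j) (d i)]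

variable {V : Type*}

def SupportedOn (M : Matrix V V ℝ) (W : Set V) : Prop :=
  ∀ i j, i ∉ W ∨ j ∉ W → M i j = 0

def VanishesOffGraph (M : Matrix V V ℝ) (G : SimpleGraph V) : Prop :=
  ∀ i j, i ≠ j → ¬ G.Adj i j → M i j = 0

lemma SupportedOn.map {M : Matrix V V ℝ} {W : Set V} (hM : M.SupportedOn W) {f : ℝ → ℝ}
    (hf0 : f 0 = 0) : (M.map f).SupportedOn W := fun i j hij => by
  rw [map_apply, hM i j hij, hf0]

lemma SupportedOn.eq_zero_or_eq_zero {N₁ N₂ : Matrix V V ℝ} {H B : Set V}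
    (h₁ : N₁.SupportedOn H) (h₂ : N₂.SupportedOn B) {i j : V}
    (hij : ¬ (i ∈ H ∩ B ∧ j ∈ H ∩ B)) : N₁ i j = 0 ∨ N₂ i j = 0 := by
  simp only [Set.mem_inter_iff] at hij
  by_cases hH : i ∈ H ∧ j ∈ H
  · exact Or.inr (h₂ i j (by tauto))
  · exact Or.inl (h₁ i j (by tauto))

variable [Finite V]

lemma PosSemidef.exists_extend {ι : Type*} [Finite ι] {X : Matrix ι ι ℝ} (hX : X.PosSemidef)
    {e : ι → V} (he : e.Injective) :
    ∃ X' : Matrix V V ℝ, X'.PosSemidef ∧ X'.submatrix e e = X ∧ X'.SupportedOn (Set.range e) := by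
  obtain ⟨m, x, rfl⟩ := hX.exists_eq_gram
  refine ⟨gram ℝ (Function.extend e x 0), posSemidef_gram ℝ _, ?_, ?_⟩
  · ext a b
    simp [he.extend_apply]
  · rintro i j (hi | hj)
    · simp [Function.extend_apply' _ _ _ (by simpa using hi)]
    · simp [Function.extend_apply' _ _ _ (by simpa using hj)]

lemma posSemidef_of_supportedOn {M : Matrix V V ℝ} {W : Set V} (hM : M.SupportedOn W)
    (hW : (M.submatrix ((↑) : W → V) (↑)).PosSemidef) : M.PosSemidef := by
  obtain ⟨X, hX, hXW, hXsupp⟩ := hW.exists_extend Subtype.val_injective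
  convert hX using 1
  ext i j
  by_cases hij : i ∈ W ∧ j ∈ W
  · exact (congrFun (congrFun hXW ⟨i, hij.1⟩) ⟨j, hij.2⟩).symm
  · rw [not_and_or] at hij
    rw [hM i j hij, hXsupp i j (by simpa using hij)]

lemma PosSemidef.exists_add_of_supportedOn_union {M : Matrix V V ℝ} (hM : M.PosSemidef)
    {H B : Set V} (hsupp : M.SupportedOn (H ∪ B)) (hsep : ∀ i ∈ H \ B, ∀ j ∈ B \ H, M i j = 0) :
    ∃ N₁ N₂ : Matrix V V ℝ, N₁.PosSemidef ∧ N₂.PosSemidef ∧ M = N₁ + N₂ ∧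
      N₁.SupportedOn H ∧ N₂.SupportedOn B := by
  obtain ⟨m, c, rfl⟩ := hM.exists_eq_gram
  have hc : ∀ i, i ∉ H → i ∉ B → c i = 0 := fun i hiH hiB =>
    inner_self_eq_zero.mp (hsupp i i (Or.inl (by simp [hiH, hiB])))
  obtain ⟨e, d, rfl, hed, he, hd⟩ := exists_orthogonal_split c hc hsep
  refine ⟨gram ℝ e, gram ℝ d, posSemidef_gram ℝ e, posSemidef_gram ℝ d,
    gram_add_of_forall_inner_eq_zero hed, ?_, ?_⟩
  · rintro i j (hi | hj)
    · simp [he i hi]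
    · simp [he j hj]
  · rintro i j (hi | hj)
    · simp [hd i hi]
    · simp [hd j hj]

end Matrix

def LoewnerSuperadditiveOn (f : ℝ → ℝ) (ι : Type*) : Prop :=
  ∀ X Y : Matrix ι ι ℝ, X.PosSemidef → Y.PosSemidef →
    ((X + Y).map f - X.map f - Y.map f).PosSemidef

lemma LoewnerSuperadditiveOn.of_card_le {f : ℝ → ℝ} {ι κ : Type*} [Fintype ι] [Fintype κ]
    (h : LoewnerSuperadditiveOn f κ) (hcard : Fintype.card ι ≤ Fintype.card κ) :
    LoewnerSuperadditiveOn f ι := by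
  obtain ⟨e⟩ := Function.Embedding.nonempty_of_card_le hcard
  intro X Y hX hY
  obtain ⟨X', hX', rfl, -⟩ := hX.exists_extend e.injective
  obtain ⟨Y', hY', rfl, -⟩ := hY.exists_extend e.injective
  convert (h X' Y' hX' hY').submatrix e using 1
  ext
  simp

lemma posSemidef_map_add_of_supportedOn {V : Type*} [Finite V] {f : ℝ → ℝ} (hf0 : f 0 = 0)
    {N₁ N₂ : Matrix V V ℝ} {H B : Set V} (hN₁ : N₁.PosSemidef) (hN₂ : N₂.PosSemidef)
    (h₁ : N₁.SupportedOn H) (h₂ : N₂.SupportedOn B) (hf₁ : (N₁.map f).PosSemidef)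
    (hf₂ : (N₂.map f).PosSemidef) (hsuper : LoewnerSuperadditiveOn f ↥(H ∩ B)) :
    ((N₁ + N₂).map f).PosSemidef := by
  set C := (N₁ + N₂).map f - N₁.map f - N₂.map f
  have hC : C.SupportedOn (H ∩ B) := fun i j hij => by
    rcases h₁.eq_zero_or_eq_zero (i := i) (j := j) h₂ (by tauto) with h | h <;> simp [C, h, hf0]
  have hCS : (C.submatrix ((↑) : ↥(H ∩ B) → V) (↑)).PosSemidef := by
    convert hsuper _ _ (hN₁.submatrix (↑)) (hN₂.submatrix (↑)) using 1
    ext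
    simp [C]
  rw [show (N₁ + N₂).map f = N₁.map f + N₂.map f + C by simp [C]]
  exact (hf₁.add hf₂).add (posSemidef_of_supportedOn hC hCS)

lemma SimpleGraph.not_adj_of_forall_walk_exists_mem {V : Type*} {G : SimpleGraph V}
    {W S : Set V} {a b : V} (ha : a ∈ W) (hb : b ∈ W) (haS : a ∉ S) (hbS : b ∉ S)
    (h : ∀ p : (G.induce W).Walk ⟨a, ha⟩ ⟨b, hb⟩, ∃ c ∈ p.support, (c : V) ∈ S) :
    ¬ G.Adj a b := by
  intro hab
  obtain ⟨c, hc, hcS⟩ := h (.cons (by simpa using hab) .nil)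
  simp only [SimpleGraph.Walk.support_cons, SimpleGraph.Walk.support_nil, List.mem_cons,
    List.not_mem_nil, or_false] at hc
  rcases hc with rfl | rfl <;> contradiction

def PreservesPosSemidefOn {V : Type*} (f : ℝ → ℝ) (G : SimpleGraph V) (W : Set V) : Prop :=
  ∀ M : Matrix V V ℝ, M.PosSemidef → M.VanishesOffGraph G → M.SupportedOn W →
    (M.map f).PosSemidef

namespace PreservesPosSemidefOn

variable {V : Type*} {f : ℝ → ℝ} {G : SimpleGraph V}

lemma empty (hf0 : f 0 = 0) : PreservesPosSemidefOn f G ∅ := by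
  intro M _ _ hM
  have : M.map f = 0 := by
    ext i j
    simp [hM i j (Or.inl (Set.notMem_empty i)), hf0]
  exact this ▸ PosSemidef.zero

lemma of_induce [Fintype V] {W : Finset V} (hf0 : f 0 = 0)
    (h : ∀ M ∈ PG (G.induce (W : Set V)) Set.univ, M.map f ∈ PG (G.induce (W : Set V)) Set.univ) :
    PreservesPosSemidefOn f G W := by
  intro M hM hG hW
  refine posSemidef_of_supportedOn (hW.map hf0) ?_
  rw [submatrix_map]
  refine (h _ ⟨hM.submatrix _, fun _ _ => trivial, fun a b hab hadj => ?_⟩).1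
  exact hG a b (Subtype.coe_ne_coe.mpr hab) (by simpa using hadj)

lemma union [Finite V] (hf0 : f 0 = 0) {H B : Set V} (hH : PreservesPosSemidefOn f G H)
    (hB : PreservesPosSemidefOn f G B) (hclique : G.IsClique (H ∩ B))
    (hsep : ∀ a ∈ H \ B, ∀ b ∈ B \ H, ¬ G.Adj a b)
    (hsuper : LoewnerSuperadditiveOn f ↥(H ∩ B)) : PreservesPosSemidefOn f G (H ∪ B) := by
  intro M hM hG hsupp
  have hMsep : ∀ i ∈ H \ B, ∀ j ∈ B \ H, M i j = 0 := fun i hi j hj =>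
    hG i j (fun h => hi.2 (h ▸ hj.1)) (hsep i hi j hj)
  obtain ⟨N₁, N₂, hN₁, hN₂, rfl, h₁, h₂⟩ := hM.exists_add_of_supportedOn_union hsupp hMsep
  -- off the clique `H ∩ B` one summand vanishes, so the other carries the zero of `N₁ + N₂`
  have hGN : ∀ i j, i ≠ j → ¬ G.Adj i j → N₁ i j = 0 ∧ N₂ i j = 0 := by
    intro i j hij hadj
    have hsum : N₁ i j + N₂ i j = 0 := hG i j hij hadj
    rcases h₁.eq_zero_or_eq_zero h₂ fun h => hadj (hclique h.1 h.2 hij) with h | h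
    · exact ⟨h, by linarith⟩
    · exact ⟨by linarith, h⟩
  exact posSemidef_map_add_of_supportedOn hf0 hN₁ hN₂ h₁ h₂
    (hH N₁ hN₁ (fun i j hij hadj => (hGN i j hij hadj).1) h₁)
    (hB N₂ hN₂ (fun i j hij hadj => (hGN i j hij hadj).2) h₂) hsuper

end PreservesPosSemidefOn

section PerfectOrdering

variable {n k : ℕ} {B : Fin k → Finset (Fin n)}

@[simp]
lemma mem_histFun {m : ℕ} {v : Fin n} : v ∈ histFun B m ↔ ∃ i : Fin k, (i : ℕ) < m ∧ v ∈ B i := by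
  simp [histFun]

lemma histFun_zero : histFun B 0 = ∅ := by
  ext; simp

lemma histFun_succ (j : Fin k) : histFun B ((j : ℕ) + 1) = histFun B j ∪ B j := by
  ext v
  simp only [mem_histFun, Finset.mem_union, Nat.lt_succ_iff_lt_or_eq, or_and_right, exists_or]
  exact or_congr Iff.rfl ⟨fun ⟨i, hi, hv⟩ => Fin.ext hi ▸ hv, fun hv => ⟨j, rfl, hv⟩⟩

lemma histFun_eq_univ (hcover : ∀ v, ∃ i, v ∈ B i) : histFun B k = Finset.univ := by
  ext v
  obtain ⟨i, hi⟩ := hcover v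
  simpa using mem_histFun.mpr ⟨i, i.isLt, hi⟩

lemma coe_sepFun (j : Fin k) :
    (sepFun B j : Set (Fin n)) = (histFun B j : Set (Fin n)) ∩ B j :=
  Finset.coe_inter _ _

lemma loewnerSuperadditiveOn_sepFun {f : ℝ → ℝ} {s : ℕ}
    (hs : s = Finset.univ.sup fun i : Fin k => (sepFun B i).card)
    (hsuper : LoewnerSuperadditiveOn f (Fin s)) (j : Fin k) :
    LoewnerSuperadditiveOn f (sepFun B j : Set (Fin n)) := by
  refine hsuper.of_card_le ?_
  simpa [hs] using Finset.le_sup (f := fun i => (sepFun B i).card) (Finset.mem_univ j)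

end PerfectOrdering

theorem stmt15_general (n k : ℕ) (G : SimpleGraph (Fin n)) (B : Fin k → Finset (Fin n))
    (hcover : ∀ v : Fin n, ∃ i : Fin k, v ∈ B i)
    (hb : ∀ i : Fin k, G.IsClique (sepFun B i : Set (Fin n)))
    (hc : ∀ j : Fin k, 0 < (j : ℕ) →
      ∀ a b : ((histFun B ((j : ℕ) + 1) : Finset (Fin n)) : Set (Fin n)),
        (a : Fin n) ∈ histFun B j \ sepFun B j → (b : Fin n) ∈ resFun B j →
        ∀ p : (G.induce ((histFun B ((j : ℕ) + 1) : Finset (Fin n)) : Set (Fin n))).Walk a b,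
          ∃ c ∈ p.support, (c : Fin n) ∈ sepFun B j)
    (s : ℕ) (hs : s = Finset.univ.sup fun i : Fin k => (sepFun B i).card)
    (f : ℝ → ℝ) (hf0 : f 0 = 0)
    (hpres : ∀ i : Fin k, ∀ M ∈ PG (G.induce ((B i : Finset (Fin n)) : Set (Fin n))) Set.univ,
      M.map f ∈ PG (G.induce ((B i : Finset (Fin n)) : Set (Fin n))) Set.univ)
    (hsuper : ∀ X Y : Matrix (Fin s) (Fin s) ℝ, X.PosSemidef → Y.PosSemidef →
      ((X + Y).map f - X.map f - Y.map f).PosSemidef) :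
    ∀ M ∈ PG G Set.univ, M.map f ∈ PG G Set.univ := by
  have hstep (j : Fin k) (hH : PreservesPosSemidefOn f G (histFun B j : Set (Fin n))) :
      PreservesPosSemidefOn f G (histFun B ((j : ℕ) + 1) : Set (Fin n)) := by
    have hsep : ∀ a ∈ (histFun B j : Set (Fin n)) \ B j, ∀ b ∈ (B j : Set (Fin n)) \ histFun B j,
        ¬ G.Adj a b := by
      rintro a ⟨ha, haB⟩ b ⟨hbB, hbH⟩
      obtain ⟨i, hi, -⟩ := mem_histFun.mp ha
      refine SimpleGraph.not_adj_of_forall_walk_exists_mem (by simp [histFun_succ, ha])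
        (by simp [histFun_succ, hbB]) (by simp [coe_sepFun, haB]) (by simp [coe_sepFun, hbH])
        (hc j (by omega) _ _ (Finset.mem_sdiff.mpr ⟨ha, fun h => haB (Finset.mem_inter.mp h).2⟩)
          (Finset.mem_sdiff.mpr ⟨hbB, hbH⟩))
    rw [histFun_succ, Finset.coe_union]
    exact hH.union hf0 (.of_induce hf0 (hpres j)) (coe_sepFun j ▸ hb j) hsep
      (coe_sepFun j ▸ loewnerSuperadditiveOn_sepFun hs hsuper j)
  have hall : ∀ m ≤ k, PreservesPosSemidefOn f G (histFun B m : Set (Fin n)) := by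
    intro m hm
    induction m with
    | zero => simpa [histFun_zero] using PreservesPosSemidefOn.empty hf0
    | succ m ih => exact hstep ⟨m, hm⟩ (ih (by omega))
  rintro M ⟨hM, -, hG⟩
  refine ⟨hall k le_rfl M hM hG ?_, fun _ _ => trivial, fun i j hij hadj => ?_⟩
  · simp [SupportedOn, histFun_eq_univ hcover]
  · simp [hG i j hij hadj, hf0]

/-- If `B_1, …, B_k` is a perfect ordering of the prime components of `G`, `s` is the
maximal size of a separator, and `f` (with `f(0) = 0`) preserves positivity on each
`P_{G_{B_i}}(ℝ)` and is Loewner super-additive on `P_s(ℝ)`, then `f[-]` preserves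
positivity on `P_G(ℝ)`. -/
theorem stmt15 (n k : ℕ) (G : SimpleGraph (Fin n)) (B : Fin k → Finset (Fin n))
    (hcover : ∀ v : Fin n, ∃ i : Fin k, v ∈ B i)
    (ha : ∀ i : Fin k, 0 < (i : ℕ) → ∃ j : Fin k, (j : ℕ) < (i : ℕ) ∧ sepFun B i ⊆ B j)
    (hb : ∀ i : Fin k, G.IsClique (sepFun B i : Set (Fin n)))
    (hc : ∀ j : Fin k, 0 < (j : ℕ) →
      ∀ a b : ((histFun B ((j : ℕ) + 1) : Finset (Fin n)) : Set (Fin n)),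
        (a : Fin n) ∈ histFun B j \ sepFun B j → (b : Fin n) ∈ resFun B j →
        ∀ p : (G.induce ((histFun B ((j : ℕ) + 1) : Finset (Fin n)) : Set (Fin n))).Walk a b,
          ∃ c ∈ p.support, (c : Fin n) ∈ sepFun B j)
    (s : ℕ) (hs : s = Finset.univ.sup fun i : Fin k => (sepFun B i).card)
    (f : ℝ → ℝ) (hf0 : f 0 = 0)
    (hpres : ∀ i : Fin k, ∀ M ∈ PG (G.induce ((B i : Finset (Fin n)) : Set (Fin n))) Set.univ,
      M.map f ∈ PG (G.induce ((B i : Finset (Fin n)) : Set (Fin n))) Set.univ)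
    (hsuper : ∀ X Y : Matrix (Fin s) (Fin s) ℝ, X.PosSemidef → Y.PosSemidef →
      ((X + Y).map f - X.map f - Y.map f).PosSemidef) :
    ∀ M ∈ PG G Set.univ, M.map f ∈ PG G Set.univ :=
  stmt15_general n k G B hcover hb hc s hs f hf0 hpres hsuper
end

section
/- Let G be a connected bipartite simple graph with at least 3 vertices. Then H_G = [1, ∞), [2, ∞) ⊆ H_G^φ ⊆ [1, ∞), and {1} ∪ [3, ∞) ⊆ H_G^ψ ⊆ [1, ∞). -/
open Matrix

/-!
For bipartite `G`, flipping the signs of a vector on one side of the bipartition shows that a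
symmetric matrix with zero pattern `G` is positive semidefinite as soon as it has the diagonal of
a positive semidefinite matrix `C` with that pattern and off-diagonal entries bounded in absolute
value by those of `C`: the vector `w i = ±|z i|`, signed by the side of `i`, gives
`z ⬝ᵥ M *ᵥ z ≥ w ⬝ᵥ C *ᵥ w ≥ 0`.
After rescaling `C` by a diagonal matrix, the bound `C i j ^ 2 ≤ C i i * C j j` makes this apply
to `C ^ β` entrywise for every `β ≥ 1`; taking `C = A` gives `[1, ∞) ⊆ H_G`, and taking the Schur
square `C = A ⊙ A` with `β = α / 2` gives `φ_α` and `ψ_α` for `α ≥ 2`.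

Conversely a connected graph on at least three vertices contains a path `i - j - k` with `i ≠ k`,
and the Gram matrix of `(1, √2, 1)` and `(1, 0, -1)` along it lies in `P_G([0, ∞))`. Its `α`-th
power restricts to `!![2^α, √2^α, 0; √2^α, 2^α, √2^α; 0, √2^α, 2^α]`, which is positive
semidefinite only if `2 * 2^α ≤ 4^α`, that is `α ≥ 1`.
-/

namespace Matrix

variable {n : Type*}

theorem PosSemidef.sq_apply_le_mul {M : Matrix n n ℝ} (hM : M.PosSemidef) (i j : n) :
    M i j ^ 2 ≤ M i i * M j j := by
  have hdet := (hM.submatrix ![i, j]).det_nonneg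
  have hsymm : M j i = M i j := hM.isHermitian.apply i j
  simp only [det_fin_two, submatrix_apply, Matrix.cons_val_zero, Matrix.cons_val_one] at hdet
  rw [hsymm, ← sq] at hdet
  linarith

theorem posSemidef_of_abs_le_of_bipartite [Fintype n] {X : Set n} {C M : Matrix n n ℝ}
    (hC : C.PosSemidef) (hCX : ∀ i j, i ≠ j → (i ∈ X ↔ j ∈ X) → C i j = 0) (hM : M.IsHermitian)
    (hdiag : ∀ i, M i i = C i i) (hoff : ∀ i j, i ≠ j → |M i j| ≤ C i j) : M.PosSemidef := by
  classical
  refine .of_dotProduct_mulVec_nonneg hM fun z => ?_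
  let w : n → ℝ := fun i => (if i ∈ X then 1 else -1) * |z i|
  refine (hC.dotProduct_mulVec_nonneg w).trans ?_
  simp only [dotProduct, mulVec, Finset.mul_sum, star_trivial]
  refine Finset.sum_le_sum fun i _ => Finset.sum_le_sum fun j _ => ?_
  rcases eq_or_ne i j with rfl | hij
  · have hw : w i * w i = z i * z i := by
      by_cases hi : i ∈ X <;> simp [w, hi]
    refine le_of_eq ?_
    calc w i * (C i i * w i) = w i * w i * C i i := by ring
      _ = z i * (M i i * z i) := by rw [hw, hdiag]; ring
  · have hflip : w i * (C i j * w j) = -(|z i| * C i j * |z j|) := by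
      by_cases hi : i ∈ X <;> by_cases hj : j ∈ X <;> simp [w, hi, hj, hCX i j hij, mul_assoc]
    calc w i * (C i j * w j) = -(|z i| * C i j * |z j|) := hflip
      _ ≤ -(|z i| * |M i j| * |z j|) := by gcongr; exact hoff i j hij
      _ = -|z i * (M i j * z j)| := by rw [abs_mul, abs_mul]; ring
      _ ≤ z i * (M i j * z j) := neg_abs_le _

/-- Conjugating `C` by `diag (C i i ^ γ)` with `β = 1 + 2γ` raises the diagonal to the power `β`
while, by `C i j ^ 2 ≤ C i i * C j j`, keeping the off-diagonal entries above `C i j ^ β`. -/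
theorem posSemidef_of_abs_le_rpow_of_bipartite [Fintype n] {X : Set n} {C M : Matrix n n ℝ}
    (hC : C.PosSemidef) (hC0 : ∀ i j, 0 ≤ C i j)
    (hCX : ∀ i j, i ≠ j → (i ∈ X ↔ j ∈ X) → C i j = 0) {β : ℝ} (hβ : 1 ≤ β)
    (hM : M.IsHermitian) (hdiag : ∀ i, M i i = C i i ^ β)
    (hoff : ∀ i j, i ≠ j → |M i j| ≤ C i j ^ β) : M.PosSemidef := by
  classical
  set γ := (β - 1) / 2
  have hγ : 0 ≤ γ := by simp only [γ]; linarith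
  have hsplit : ∀ {x : ℝ}, 0 ≤ x → x ^ β = x ^ γ * x * x ^ γ := fun hx => by
    rw [show β = γ + 1 + γ by simp only [γ]; ring, Real.rpow_add' hx (by linarith),
      Real.rpow_add' hx (by linarith), Real.rpow_one]
  let D : Matrix n n ℝ := diagonal fun i => C i i ^ γ
  have hDCD : ∀ i j, (D * C * Dᴴ) i j = C i i ^ γ * C i j * C j j ^ γ := by
    simp [D, mul_comm]
  refine posSemidef_of_abs_le_of_bipartite (X := X) (hC.mul_mul_conjTranspose_same D)
    (fun i j hij hs => by rw [hDCD, hCX i j hij hs]; ring) hM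
    (fun i => by rw [hdiag, hDCD, hsplit (hC0 i i)]) fun i j hij => (hoff i j hij).trans ?_
  have hCij := hC0 i j
  calc C i j ^ β = C i j * (C i j * C i j) ^ γ := by
        rw [hsplit hCij, Real.mul_rpow hCij hCij]; ring
    _ ≤ C i j * (C i i * C j j) ^ γ := by
        gcongr C i j * ?_ ^ γ
        simpa only [sq] using hC.sq_apply_le_mul i j
    _ = (D * C * Dᴴ) i j := by rw [hDCD, Real.mul_rpow (hC0 i i) (hC0 j j)]; ring

end Matrix

section PowerFunctions

variable {α : ℝ}

theorem powF_zero (α : ℝ) : powF α 0 = 0 := if_pos rfl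

theorem phiF_zero (α : ℝ) : phiF α 0 = 0 := if_pos rfl

theorem psiF_zero (α : ℝ) : psiF α 0 = 0 := if_pos rfl

theorem powF_of_pos {x : ℝ} (hx : 0 < x) : powF α x = x ^ α := if_neg hx.ne'

theorem powF_of_nonneg (hα : α ≠ 0) {x : ℝ} (hx : 0 ≤ x) : powF α x = x ^ α := by
  rcases hx.eq_or_lt with rfl | hx
  · rw [powF_zero, Real.zero_rpow hα]
  · exact powF_of_pos hx

theorem phiF_eq_powF_of_nonneg {x : ℝ} (hx : 0 ≤ x) : phiF α x = powF α x := by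
  simp [phiF, powF, abs_of_nonneg hx]

theorem psiF_eq_powF_of_nonneg {x : ℝ} (hx : 0 ≤ x) : psiF α x = powF α x := by
  rcases hx.eq_or_lt with rfl | hx
  · rw [psiF_zero, powF_zero]
  · simp [psiF, powF, hx.ne', Real.sign_of_pos hx, abs_of_pos hx]

theorem abs_phiF (hα : α ≠ 0) (x : ℝ) : |phiF α x| = |x| ^ α := by
  rcases eq_or_ne x 0 with rfl | hx
  · simp [phiF_zero, Real.zero_rpow hα]
  · simp [phiF, hx, abs_of_nonneg (Real.rpow_nonneg (abs_nonneg x) α)]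

theorem abs_psiF (hα : α ≠ 0) (x : ℝ) : |psiF α x| = |x| ^ α := by
  rcases lt_trichotomy x 0 with hx | rfl | hx
  · simp [psiF, hx.ne, Real.sign_of_neg hx, abs_of_nonneg (Real.rpow_nonneg (abs_nonneg x) α)]
  · simp [psiF_zero, Real.zero_rpow hα]
  · simp [psiF, hx.ne', Real.sign_of_pos hx, abs_of_nonneg (Real.rpow_nonneg (abs_nonneg x) α)]

theorem phiF_nonneg (x : ℝ) : 0 ≤ phiF α x := by
  unfold phiF; split_ifs
  exacts [le_rfl, Real.rpow_nonneg (abs_nonneg x) α]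

theorem psiF_nonneg {x : ℝ} (hx : 0 ≤ x) : 0 ≤ psiF α x := by
  rw [psiF_eq_powF_of_nonneg hx]
  unfold powF; split_ifs
  exacts [le_rfl, Real.rpow_nonneg hx α]

theorem psiF_one : psiF 1 = id := by
  ext x
  rcases lt_trichotomy x 0 with hx | rfl | hx
  · simp [psiF, hx.ne, Real.sign_of_neg hx, abs_of_neg hx]
  · exact psiF_zero 1
  · simp [psiF, hx.ne', Real.sign_of_pos hx, abs_of_pos hx]

end PowerFunctions

section PG

variable {V : Type*} [Fintype V] {G : SimpleGraph V} {X : Set V}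

theorem PG_mono {I J : Set ℝ} (hIJ : I ⊆ J) : PG G I ⊆ PG G J :=
  fun _ ⟨hA, hAI, hAG⟩ => ⟨hA, fun i j => hIJ (hAI i j), hAG⟩

theorem map_mem_PG_univ {I : Set ℝ} {A : Matrix V V ℝ} (hA : A ∈ PG G I) {f : ℝ → ℝ}
    (hf0 : f 0 = 0) (hf : (A.map f).PosSemidef) : A.map f ∈ PG G Set.univ :=
  ⟨hf, fun _ _ => trivial, fun i j hij hG => by rw [map_apply, hA.2.2 i j hij hG, hf0]⟩

theorem map_eq_map_of_mem_PG_Ici {A : Matrix V V ℝ} (hA : A ∈ PG G (Set.Ici 0))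
    {f g : ℝ → ℝ} (hfg : ∀ x, 0 ≤ x → f x = g x) : A.map f = A.map g :=
  Matrix.ext fun i j => hfg _ (hA.2.1 i j)

theorem apply_eq_zero_of_mem_PG_of_mem_iff_mem (hX : ∀ i j : V, G.Adj i j → (i ∈ X ↔ j ∉ X))
    {I : Set ℝ} {A : Matrix V V ℝ} (hA : A ∈ PG G I) {i j : V} (hij : i ≠ j)
    (hside : i ∈ X ↔ j ∈ X) : A i j = 0 :=
  hA.2.2 i j hij fun hG => by have := hX i j hG; tauto

theorem posSemidef_map_powF (hX : ∀ i j : V, G.Adj i j → (i ∈ X ↔ j ∉ X)) {α : ℝ}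
    (hα : 1 ≤ α) {A : Matrix V V ℝ} (hA : A ∈ PG G (Set.Ici 0)) :
    (A.map (powF α)).PosSemidef := by
  have hA0 : ∀ i j, 0 ≤ A i j := hA.2.1
  have hpow : ∀ i j, A.map (powF α) i j = A i j ^ α := fun i j =>
    powF_of_nonneg (by linarith) (hA0 i j)
  refine posSemidef_of_abs_le_rpow_of_bipartite hA.1 hA0
    (fun i j hij => apply_eq_zero_of_mem_PG_of_mem_iff_mem hX hA hij) hα
    (hA.1.isHermitian.map _ fun _ => rfl) (fun i => hpow i i) fun i j _ => ?_
  rw [hpow, abs_of_nonneg (Real.rpow_nonneg (hA0 i j) α)]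

theorem posSemidef_map_of_abs_eq_rpow (hX : ∀ i j : V, G.Adj i j → (i ∈ X ↔ j ∉ X)) {α : ℝ}
    (hα : 2 ≤ α) {f : ℝ → ℝ} (hf : ∀ x, |f x| = |x| ^ α) (hf0 : ∀ x, 0 ≤ x → 0 ≤ f x)
    {A : Matrix V V ℝ} (hA : A ∈ PG G Set.univ) : (A.map f).PosSemidef := by
  have hsq : ∀ x : ℝ, |f x| = (x * x) ^ (α / 2) := fun x => by
    rw [hf, ← abs_mul_abs_self, ← sq, ← Real.rpow_natCast, ← Real.rpow_mul (abs_nonneg x)]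
    congr 1; push_cast; ring
  refine posSemidef_of_abs_le_rpow_of_bipartite (X := X) (hA.1.hadamard hA.1)
    (fun i j => mul_self_nonneg (A i j))
    (fun i j hij hside => by
      rw [hadamard_apply, apply_eq_zero_of_mem_PG_of_mem_iff_mem hX hA hij hside, zero_mul])
    (by linarith) (hA.1.isHermitian.map _ fun _ => rfl) (fun i => ?_) fun i j _ => (hsq _).le
  rw [map_apply, hadamard_apply, ← hsq, abs_of_nonneg (hf0 _ hA.1.diag_nonneg)]

end PG

theorem SimpleGraph.Connected.exists_adj_adj_ne {V : Type*} [Fintype V] {G : SimpleGraph V}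
    (hconn : G.Connected) (hcard : 3 ≤ Fintype.card V) :
    ∃ i j k, G.Adj i j ∧ G.Adj j k ∧ i ≠ k := by
  by_contra! H
  have hwalk : ∀ {x y : V}, G.Walk x y → x = y ∨ G.Adj x y := by
    intro x y w
    induction w with
    | nil => exact Or.inl rfl
    | cons h _ ih =>
      rcases ih with rfl | h'
      · exact Or.inr h
      · exact Or.inl (H _ _ _ h h')
  obtain ⟨a, b, c, hab, hac, hbc⟩ := Fintype.two_lt_card_iff.mp hcard
  obtain ⟨w₁⟩ := hconn.preconnected a b
  obtain ⟨w₂⟩ := hconn.preconnected b c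
  exact hac (H a b c ((hwalk w₁).resolve_left hab) ((hwalk w₂).resolve_left hbc))

theorem two_mul_sq_le_sq_of_posSemidef {d c : ℝ} (hd : 0 < d)
    (h : (!![d, c, 0; c, d, c; 0, c, d]).PosSemidef) : 2 * c ^ 2 ≤ d ^ 2 := by
  have hq := h.dotProduct_mulVec_nonneg ![c, -d, c]
  have hval : star ![c, -d, c] ⬝ᵥ !![d, c, 0; c, d, c; 0, c, d] *ᵥ ![c, -d, c] =
      d * (d ^ 2 - 2 * c ^ 2) := by
    simp [Fin.sum_univ_three, dotProduct, mulVec]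
    ring
  rw [hval] at hq
  linarith [(mul_nonneg_iff_of_pos_left hd).mp hq]

section Counterexample

variable {V : Type*} [Fintype V] {G : SimpleGraph V}

theorem exists_mem_PG_submatrix_eq {i j k : V} (hij : G.Adj i j) (hjk : G.Adj j k) (hik : i ≠ k) :
    ∃ A ∈ PG G (Set.Ici 0),
      A.submatrix ![i, j, k] ![i, j, k] = !![2, √2, 0; √2, 2, √2; 0, √2, 2] := by
  set e : Fin 3 → V := ![i, j, k]
  have he : e.Injective := by
    intro a b hab
    fin_cases a <;> fin_cases b <;> simp_all [e, G.ne_of_adj hij, G.ne_of_adj hjk,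
      (G.ne_of_adj hij).symm, (G.ne_of_adj hjk).symm, hik.symm]
  set x : V → ℝ := Function.extend e ![1, √2, 1] 0
  set y : V → ℝ := Function.extend e ![1, 0, -1] 0
  set A : Matrix V V ℝ := vecMulVec x x + vecMulVec y y
  have hA : ∀ p q, A p q = x p * x q + y p * y q := fun p q => rfl
  have hAe : A.submatrix e e = !![2, √2, 0; √2, 2, √2; 0, √2, 2] := by
    ext a b
    fin_cases a <;> fin_cases b <;> simp [hA, x, y, he.extend_apply, one_add_one_eq_two]
  have hentry : ∀ a b, A (e a) (e b) = !![2, √2, 0; √2, 2, √2; 0, √2, 2] a b :=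
    fun a b => congrFun₂ hAe a b
  have hsupp : ∀ p q, A p q = 0 ∨ ∃ a b, e a = p ∧ e b = q := by
    intro p q
    rcases em (∃ a, e a = p) with ⟨a, rfl⟩ | hp
    · rcases em (∃ b, e b = q) with ⟨b, rfl⟩ | hq
      · exact Or.inr ⟨a, b, rfl, rfl⟩
      · simp [hA, x, y, Function.extend_apply' _ _ _ hq]
    · simp [hA, x, y, Function.extend_apply' _ _ _ hp]
  refine ⟨A, ⟨?_, fun p q => ?_, fun p q hpq hG => ?_⟩, hAe⟩
  · simpa using (posSemidef_vecMulVec_self_star x).add (posSemidef_vecMulVec_self_star y)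
  · rcases hsupp p q with h | ⟨a, b, rfl, rfl⟩
    · exact h.symm.le
    · rw [Set.mem_Ici, hentry]
      fin_cases a <;> fin_cases b <;> simp
  · rcases hsupp p q with h | ⟨a, b, rfl, rfl⟩
    · exact h
    · rw [hentry]
      fin_cases a <;> fin_cases b <;> simp_all [e, G.adj_symm]

theorem one_le_of_forall_posSemidef_map_powF {i j k : V} (hij : G.Adj i j) (hjk : G.Adj j k)
    (hik : i ≠ k) {α : ℝ} (h : ∀ A ∈ PG G (Set.Ici 0), (A.map (powF α)).PosSemidef) : 1 ≤ α := by
  obtain ⟨A, hA, hAe⟩ := exists_mem_PG_submatrix_eq hij hjk hik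
  have hB := (h A hA).submatrix ![i, j, k]
  rw [submatrix_map, hAe] at hB
  have hB' : (!![2 ^ α, √2 ^ α, 0; √2 ^ α, 2 ^ α, √2 ^ α; 0, √2 ^ α, 2 ^ α]).PosSemidef := by
    convert hB using 1
    ext a b
    fin_cases a <;> fin_cases b <;> simp [powF_zero, powF_of_pos]
  have hsq : (√2 ^ α) ^ 2 = 2 ^ α := by
    rw [sq, ← Real.mul_rpow (by positivity) (by positivity), Real.mul_self_sqrt zero_le_two]
  have h2 : (0 : ℝ) < 2 ^ α := by positivity
  have key := two_mul_sq_le_sq_of_posSemidef h2 hB'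
  rw [hsq, sq] at key
  have : (2 : ℝ) ^ (1 : ℝ) ≤ 2 ^ α := by rw [Real.rpow_one]; nlinarith
  exact (Real.rpow_le_rpow_left_iff one_lt_two).mp this

end Counterexample

/-- For a connected bipartite graph `G` on at least 3 vertices: `H_G = [1, ∞)`,
`[2, ∞) ⊆ H_G^φ ⊆ [1, ∞)`, and `{1} ∪ [3, ∞) ⊆ H_G^ψ ⊆ [1, ∞)`. -/
theorem stmt18 {V : Type*} [Fintype V] (G : SimpleGraph V) (hcard : 3 ≤ Fintype.card V)
    (hconn : G.Connected)
    (hbip : ∃ X : Set V, ∀ i j : V, G.Adj i j → (i ∈ X ↔ j ∉ X)) :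
    HSet G = Set.Ici 1 ∧
    Set.Ici 2 ⊆ HSetPhi G ∧ HSetPhi G ⊆ Set.Ici 1 ∧
    {(1 : ℝ)} ∪ Set.Ici 3 ⊆ HSetPsi G ∧ HSetPsi G ⊆ Set.Ici 1 := by
  obtain ⟨X, hX⟩ := hbip
  obtain ⟨i, j, k, hij, hjk, hik⟩ := hconn.exists_adj_adj_ne hcard
  have one_le : ∀ {α : ℝ} {f : ℝ → ℝ}, (∀ x, 0 ≤ x → f x = powF α x) →
      (∀ A ∈ PG G (Set.Ici 0), A.map f ∈ PG G Set.univ) → 1 ≤ α := fun hf hmap =>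
    one_le_of_forall_posSemidef_map_powF hij hjk hik fun A hA =>
      map_eq_map_of_mem_PG_Ici hA hf ▸ (hmap A hA).1
  have restrict : ∀ {f : ℝ → ℝ}, (∀ A ∈ PG G Set.univ, A.map f ∈ PG G Set.univ) →
      ∀ A ∈ PG G (Set.Ici 0), A.map f ∈ PG G Set.univ :=
    fun hmap A hA => hmap A (PG_mono (Set.subset_univ _) hA)
  refine ⟨?_, ?_, fun α hα => one_le (fun _ => phiF_eq_powF_of_nonneg) (restrict hα), ?_,
    fun α hα => one_le (fun _ => psiF_eq_powF_of_nonneg) (restrict hα)⟩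
  · refine subset_antisymm (fun α hα => one_le (fun _ _ => rfl) hα) fun α hα A hA => ?_
    exact map_mem_PG_univ hA (powF_zero α) (posSemidef_map_powF hX hα hA)
  · intro α (hα : 2 ≤ α) A hA
    exact map_mem_PG_univ hA (phiF_zero α) (posSemidef_map_of_abs_eq_rpow hX hα
      (abs_phiF (by linarith)) (fun _ _ => phiF_nonneg _) hA)
  · rintro α (rfl | (hα : 3 ≤ α)) A hA
    · rwa [psiF_one, map_id]
    · exact map_mem_PG_univ hA (psiF_zero α) (posSemidef_map_of_abs_eq_rpow hX (by linarith)
        (abs_psiF (by linarith)) (fun _ => psiF_nonneg) hA)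
end
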